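/- arXiv:1201.6226 — 6 statements merged into one kernel-verified Lean document; each statement's English description precedes it below -/
import Mathlib

section
/- Let f : [a,b] → ℝ be continuous and integrable on [a,b] with 0 ≤ a < b, and suppose f is (α,m)-convex on [a,b] for some fixed (α,m) ∈ (0,1]². Then for any fixed p, q > 0, ∫_a^b (x-a)^p (b-x)^q f(x) dx ≤ (b-a)^{p+q+1} [β(q+α+1, p+1) f(a) + m(β(q+1, p+1) − β(q+α+1, p+1)) f(b/m)], where β is the Euler Beta function. -/
open Real Set MeasureTheory intervalIntegral

noncomputable def beta (x y : ℝ) : ℝ := ∫ t in (0:ℝ)..1, t ^ (x-1) * (1-t) ^ (y-1)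

def AMConvexOn (s : Set ℝ) (α m : ℝ) (g : ℝ → ℝ) : Prop :=
  ∀ x ∈ s, ∀ y ∈ s, ∀ t ∈ Set.Icc (0:ℝ) 1, g (t*x + m*(1-t)*y) ≤ t ^ α * g x + m*(1 - t ^ α) * g y

lemma beta_symm_int (x y : ℝ) : beta x y = ∫ t in (0:ℝ)..1, t ^ (y-1) * (1-t) ^ (x-1) := by
  unfold beta
  have h := intervalIntegral.integral_comp_sub_left (a := (0:ℝ)) (b := 1)
      (fun s => s ^ (x-1) * (1-s) ^ (y-1)) 1
  simp only [sub_zero, sub_self] at h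
  rw [← h]
  apply intervalIntegral.integral_congr
  intro t _
  simp only [sub_sub_cancel]
  ring

theorem stmt1 (a b p q : ℝ) (f : ℝ → ℝ)
    (ha : 0 ≤ a) (hab : a < b) (hp : 0 < p) (hq : 0 < q)
    (hcont : ContinuousOn f (Set.Icc a b))
    (hint : IntervalIntegrable f volume a b)
    (α m : ℝ) (hα : α ∈ Set.Ioc (0:ℝ) 1) (hm : m ∈ Set.Ioc (0:ℝ) 1)
    (hf : AMConvexOn (Set.Icc 0 (b/m)) α m f) :
    ∫ x in a..b, (x-a)^p * (b-x)^q * f x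
      ≤ (b-a)^(p+q+1) * (beta (q+α+1) (p+1) * f a
          + m * (beta (q+1) (p+1) - beta (q+α+1) (p+1)) * f (b/m)) := by
  obtain ⟨hα0, hα1⟩ := hα
  obtain ⟨hm0, hm1⟩ := hm
  set c := b - a with hc_def
  have hc : 0 < c := sub_pos.2 hab
  have hb : 0 < b := lt_of_le_of_lt ha hab
  have hbm : b ≤ b / m := le_div_iff₀ hm0 |>.2 (by nlinarith)
  -- continuity helpers
  have cp : Continuous fun t : ℝ => t ^ p := Real.continuous_rpow_const hp.le
  have cq : Continuous fun t : ℝ => (1 - t) ^ q :=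
    (Real.continuous_rpow_const hq.le).comp (continuous_const.sub continuous_id)
  have cqa : Continuous fun t : ℝ => (1 - t) ^ (q + α) :=
    (Real.continuous_rpow_const (by positivity)).comp (continuous_const.sub continuous_id)
  have ca : Continuous fun t : ℝ => (1 - t) ^ α :=
    (Real.continuous_rpow_const hα0.le).comp (continuous_const.sub continuous_id)
  have haff : Continuous fun t : ℝ => c * t + a := by continuity
  have hmaps : ∀ t ∈ Set.Icc (0:ℝ) 1, c * t + a ∈ Set.Icc a b := by
    intro t ht
    constructor
    · nlinarith [ht.1]
    · nlinarith [ht.2]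
  have hfc : ContinuousOn (fun t => f (c * t + a)) (Set.Icc (0:ℝ) 1) :=
    hcont.comp haff.continuousOn hmaps
  have huIcc : Set.uIcc (0:ℝ) 1 = Set.Icc (0:ℝ) 1 := Set.uIcc_of_le zero_le_one
  -- Step 1: change of variables
  have step1 : ∫ x in a..b, (x-a)^p * (b-x)^q * f x
      = c ^ (p+q+1) * ∫ t in (0:ℝ)..1, t^p * (1-t)^q * f (c * t + a) := by
    have h := intervalIntegral.smul_integral_comp_mul_add (a := (0:ℝ)) (b := 1)
        (fun x => (x-a)^p * (b-x)^q * f x) c a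
    simp only [mul_zero, zero_add, mul_one] at h
    rw [show (c + a) = b from by rw [hc_def]; ring] at h
    rw [← h, smul_eq_mul]
    have hcong : ∫ t in (0:ℝ)..1, (c*t + a - a)^p * (b - (c*t + a))^q * f (c*t + a)
        = ∫ t in (0:ℝ)..1, (c^p * c^q) * (t^p * (1-t)^q * f (c * t + a)) := by
      apply intervalIntegral.integral_congr
      intro t ht
      rw [huIcc] at ht
      have h1 : c * t + a - a = c * t := by ring
      have h2 : b - (c * t + a) = c * (1 - t) := by rw [hc_def]; ring
      dsimp only
      rw [h1, h2, Real.mul_rpow hc.le ht.1, Real.mul_rpow hc.le (by linarith [ht.2])]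
      ring
    rw [hcong, intervalIntegral.integral_const_mul]
    rw [show c ^ (p+q+1) = c * (c^p * c^q) from by
      rw [Real.rpow_add hc, Real.rpow_add hc, Real.rpow_one]; ring]
    ring
  -- integrability facts
  have int1 : IntervalIntegrable (fun t => t^p * (1-t)^q * f (c * t + a)) volume 0 1 := by
    apply ContinuousOn.intervalIntegrable
    rw [huIcc]
    exact ((cp.continuousOn.mul cq.continuousOn).mul hfc)
  have int2 : IntervalIntegrable
      (fun t => t^p * (1-t)^q * ((1-t)^α * f a + m * (1 - (1-t)^α) * f (b/m))) volume 0 1 := by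
    apply Continuous.intervalIntegrable
    continuity
  have int3 : IntervalIntegrable (fun t => t^p * (1-t)^(q+α)) volume 0 1 :=
    (cp.mul cqa).intervalIntegrable 0 1
  have int4 : IntervalIntegrable (fun t => t^p * (1-t)^q) volume 0 1 :=
    (cp.mul cq).intervalIntegrable 0 1
  -- Step 2: pointwise bound
  have step2 : (∫ t in (0:ℝ)..1, t^p * (1-t)^q * f (c * t + a))
      ≤ ∫ t in (0:ℝ)..1, t^p * (1-t)^q * ((1-t)^α * f a + m * (1 - (1-t)^α) * f (b/m)) := by
    apply intervalIntegral.integral_mono_on zero_le_one int1 int2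
    intro t ht
    have hfb : f (c * t + a) ≤ (1-t)^α * f a + m * (1 - (1-t)^α) * f (b/m) := by
      have hmem_a : a ∈ Set.Icc (0:ℝ) (b/m) := ⟨ha, le_trans hab.le hbm⟩
      have hmem_b : b/m ∈ Set.Icc (0:ℝ) (b/m) := ⟨by positivity, le_refl _⟩
      have hs : (1-t) ∈ Set.Icc (0:ℝ) 1 := ⟨by linarith [ht.2], by linarith [ht.1]⟩
      have := hf a hmem_a (b/m) hmem_b (1-t) hs
      have harg : (1-t)*a + m*(1-(1-t))*(b/m) = c * t + a := by
        rw [hc_def]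
        field_simp
        ring
      rwa [harg] at this
    have hnn : 0 ≤ t^p * (1-t)^q := by
      apply mul_nonneg <;> apply Real.rpow_nonneg
      exacts [ht.1, by linarith [ht.2]]
    exact mul_le_mul_of_nonneg_left hfb hnn
  -- Step 3: compute the RHS integral
  have hbeta1 : beta (q+α+1) (p+1) = ∫ t in (0:ℝ)..1, t^p * (1-t)^(q+α) := by
    rw [beta_symm_int]
    norm_num
  have hbeta0 : beta (q+1) (p+1) = ∫ t in (0:ℝ)..1, t^p * (1-t)^q := by
    rw [beta_symm_int]
    norm_num
  have step3 : (∫ t in (0:ℝ)..1, t^p * (1-t)^q * ((1-t)^α * f a + m * (1 - (1-t)^α) * f (b/m)))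
      = beta (q+α+1) (p+1) * f a + m * (beta (q+1) (p+1) - beta (q+α+1) (p+1)) * f (b/m) := by
    have hcong : ∫ t in (0:ℝ)..1, t^p * (1-t)^q * ((1-t)^α * f a + m * (1 - (1-t)^α) * f (b/m))
        = ∫ t in (0:ℝ)..1, (f a * (t^p * (1-t)^(q+α))
            + (m * f (b/m)) * (t^p * (1-t)^q) - (m * f (b/m)) * (t^p * (1-t)^(q+α))) := by
      apply intervalIntegral.integral_congr
      intro t ht
      rw [huIcc] at ht
      have h1t : (0:ℝ) ≤ 1 - t := by linarith [ht.2]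
      have hqa : (1-t)^(q+α) = (1-t)^q * (1-t)^α := Real.rpow_add' h1t (by positivity)
      dsimp only
      rw [hqa]
      ring
    rw [hcong, intervalIntegral.integral_sub (by
        exact ((int3.const_mul (f a)).add (int4.const_mul (m * f (b/m))))) (int3.const_mul _),
      intervalIntegral.integral_add (int3.const_mul _) (int4.const_mul _),
      intervalIntegral.integral_const_mul, intervalIntegral.integral_const_mul,
      intervalIntegral.integral_const_mul, hbeta1, hbeta0]
    ring
  rw [step1]
  have hcpos : (0:ℝ) ≤ c ^ (p+q+1) := Real.rpow_nonneg hc.le _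
  calc c ^ (p+q+1) * ∫ t in (0:ℝ)..1, t^p * (1-t)^q * f (c * t + a)
      ≤ c ^ (p+q+1) * ∫ t in (0:ℝ)..1, t^p * (1-t)^q * ((1-t)^α * f a + m * (1 - (1-t)^α) * f (b/m)) :=
        mul_le_mul_of_nonneg_left step2 hcpos
    _ = (b-a)^(p+q+1) * (beta (q+α+1) (p+1) * f a
          + m * (beta (q+1) (p+1) - beta (q+α+1) (p+1)) * f (b/m)) := by rw [step3]
end

section
/- Let f : [a,b] → ℝ be continuous and integrable on [a,b] with 0 ≤ a < b, and suppose f is (α,m)-convex for some fixed (α,m) ∈ (0,1]². Then for any fixed p, q > 0, ∫_a^b (x-a)^p (b-x)^q f(x) dx ≤ (b-a)^{p+q+1} [β(q+1, p+α+1) f(b) + m(β(q+1, p+1) − β(q+1, p+α+1)) f(a/m)]. -/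
/-!
Substituting `x = b - (b - a) t` turns the integral into `(b - a)^(p+q+1)` times
`∫₀¹ t^q (1-t)^p f(b - (b - a) t)`, and `b - (b - a) t = (1 - t) b + m t (a / m)` is exactly a
point at which `(α,m)`-convexity bounds `f` by `(1-t)^α f(b) + m (1 - (1-t)^α) f(a/m)`.
Integrating this bound against the weight `t^q (1-t)^p` produces the two beta integrals.
-/

open Real Set MeasureTheory intervalIntegral

theorem AMConvexOn.apply_sub_mul_le {s : Set ℝ} {α m x y t : ℝ} {f : ℝ → ℝ}
    (hf : AMConvexOn s α m f) (hm : m ≠ 0) (hx : x ∈ s) (hy : y / m ∈ s)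
    (ht : t ∈ Icc (0:ℝ) 1) :
    f (x - (x - y) * t) ≤ (1 - t) ^ α * f x + m * (1 - (1 - t) ^ α) * f (y / m) := by
  have hpoint : x - (x - y) * t = (1 - t) * x + m * (1 - (1 - t)) * (y / m) := by
    field_simp
    ring
  rw [hpoint]
  exact hf x hx (y / m) hy (1 - t) ⟨by linarith [ht.2], by linarith [ht.1]⟩

theorem integral_sub_rpow_mul_rpow_sub_mul {a b : ℝ} (hab : a < b) (p q : ℝ) (g : ℝ → ℝ) :
    ∫ x in a..b, (x - a) ^ p * (b - x) ^ q * g x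
      = (b - a) ^ (p + q + 1) * ∫ t in (0:ℝ)..1, t ^ q * (1 - t) ^ p * g (b - (b - a) * t) := by
  have hba : 0 < b - a := sub_pos.2 hab
  have hsubst := integral_comp_sub_mul (fun x => (x - a) ^ p * (b - x) ^ q * g x) hba.ne' b
    (a := 0) (b := 1)
  simp only [mul_one, mul_zero, sub_zero, sub_sub_cancel, smul_eq_mul] at hsubst
  have hweight : ∀ t ∈ uIcc (0:ℝ) 1,
      (b - (b - a) * t - a) ^ p * ((b - a) * t) ^ q * g (b - (b - a) * t)
        = (b - a) ^ (p + q) * (t ^ q * (1 - t) ^ p * g (b - (b - a) * t)) := by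
    intro t ht
    rw [uIcc_of_le zero_le_one] at ht
    rw [show b - (b - a) * t - a = (b - a) * (1 - t) by ring,
      mul_rpow hba.le (by linarith [ht.2]), mul_rpow hba.le ht.1, rpow_add hba]
    ring
  rw [integral_congr hweight, intervalIntegral.integral_const_mul] at hsubst
  rw [rpow_add hba, rpow_one, mul_right_comm, hsubst]
  field_simp

theorem integral_rpow_mul_one_sub_rpow (p q : ℝ) :
    ∫ t in (0:ℝ)..1, t ^ q * (1 - t) ^ p = beta (q + 1) (p + 1) := by
  simp only [beta, add_sub_cancel_right]

theorem continuous_rpow_mul_one_sub_rpow {p q : ℝ} (hp : 0 ≤ p) (hq : 0 ≤ q) :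
    Continuous fun t : ℝ => t ^ q * (1 - t) ^ p :=
  (continuous_rpow_const hq).mul
    ((continuous_rpow_const hp).comp (continuous_const.sub continuous_id))

theorem integral_rpow_mul_one_sub_rpow_mul_amconvex_bound {p q α : ℝ}
    (hp : 0 ≤ p) (hq : 0 ≤ q) (hα : 0 ≤ α) (m c d : ℝ) :
    ∫ t in (0:ℝ)..1, t ^ q * (1 - t) ^ p * ((1 - t) ^ α * c + m * (1 - (1 - t) ^ α) * d)
      = beta (q + 1) (p + α + 1) * c
          + m * (beta (q + 1) (p + 1) - beta (q + 1) (p + α + 1)) * d := by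
  have hsplit : ∀ t ∈ uIcc (0:ℝ) 1,
      t ^ q * (1 - t) ^ p * ((1 - t) ^ α * c + m * (1 - (1 - t) ^ α) * d)
        = (c - m * d) * (t ^ q * (1 - t) ^ (p + α)) + m * d * (t ^ q * (1 - t) ^ p) := by
    intro t ht
    rw [uIcc_of_le zero_le_one] at ht
    rw [rpow_add_of_nonneg (by linarith [ht.2]) hp hα]
    ring
  rw [integral_congr hsplit, intervalIntegral.integral_add
      (((continuous_rpow_mul_one_sub_rpow (by positivity) hq).intervalIntegrable _ _).const_mul _)
      (((continuous_rpow_mul_one_sub_rpow hp hq).intervalIntegrable _ _).const_mul _),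
    intervalIntegral.integral_const_mul, intervalIntegral.integral_const_mul,
    integral_rpow_mul_one_sub_rpow, integral_rpow_mul_one_sub_rpow]
  ring

theorem stmt2_general (a b p q : ℝ) (f : ℝ → ℝ)
    (ha : 0 ≤ a) (hab : a < b) (hp : 0 < p) (hq : 0 < q)
    (hcont : ContinuousOn f (Set.Icc a b))
    (α m : ℝ) (hα : α ∈ Set.Ioc (0:ℝ) 1) (hm : m ∈ Set.Ioc (0:ℝ) 1)
    (hf : AMConvexOn (Set.Icc 0 (max b (a/m))) α m f) :
    ∫ x in a..b, (x-a)^p * (b-x)^q * f x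
      ≤ (b-a)^(p+q+1) * (beta (q+1) (p+α+1) * f b
          + m * (beta (q+1) (p+1) - beta (q+1) (p+α+1)) * f (a/m)) := by
  have hmaps : MapsTo (fun t => b - (b - a) * t) (uIcc 0 1) (Icc a b) := by
    intro t ht
    rw [uIcc_of_le zero_le_one] at ht
    constructor <;> nlinarith [ht.1, ht.2]
  have hweight := continuous_rpow_mul_one_sub_rpow hp.le hq.le
  have hlhs :
      IntervalIntegrable (fun t => t ^ q * (1 - t) ^ p * f (b - (b - a) * t)) volume 0 1 :=
    (hweight.continuousOn.mul (hcont.comp (by fun_prop) hmaps)).intervalIntegrable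
  have hrhs : IntervalIntegrable (fun t : ℝ => t ^ q * (1 - t) ^ p
      * ((1 - t) ^ α * f b + m * (1 - (1 - t) ^ α) * f (a / m))) volume 0 1 :=
    (hweight.mul (by fun_prop (disch := exact hα.1.le))).intervalIntegrable _ _
  have hbound : ∀ t ∈ Icc (0:ℝ) 1, t ^ q * (1 - t) ^ p * f (b - (b - a) * t)
      ≤ t ^ q * (1 - t) ^ p * ((1 - t) ^ α * f b + m * (1 - (1 - t) ^ α) * f (a / m)) :=
    fun t ht => mul_le_mul_of_nonneg_left
      (hf.apply_sub_mul_le hm.1.ne' ⟨by linarith, le_max_left _ _⟩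
        ⟨div_nonneg ha hm.1.le, le_max_right _ _⟩ ht)
      (mul_nonneg (rpow_nonneg ht.1 q) (rpow_nonneg (by linarith [ht.2]) p))
  rw [integral_sub_rpow_mul_rpow_sub_mul hab, ← integral_rpow_mul_one_sub_rpow_mul_amconvex_bound
    hp.le hq.le hα.1.le]
  exact mul_le_mul_of_nonneg_left (integral_mono_on zero_le_one hlhs hrhs hbound)
    (rpow_nonneg (sub_nonneg.2 hab.le) _)

theorem stmt2 (a b p q : ℝ) (f : ℝ → ℝ)
    (ha : 0 ≤ a) (hab : a < b) (hp : 0 < p) (hq : 0 < q)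
    (hcont : ContinuousOn f (Set.Icc a b))
    (hint : IntervalIntegrable f volume a b)
    (α m : ℝ) (hα : α ∈ Set.Ioc (0:ℝ) 1) (hm : m ∈ Set.Ioc (0:ℝ) 1)
    (hf : AMConvexOn (Set.Icc 0 (max b (a/m))) α m f) :
    ∫ x in a..b, (x-a)^p * (b-x)^q * f x
      ≤ (b-a)^(p+q+1) * (beta (q+1) (p+α+1) * f b
          + m * (beta (q+1) (p+1) - beta (q+1) (p+α+1)) * f (a/m)) :=
  stmt2_general a b p q f ha hab hp hq hcont α m hα hm hf
end

section
/- Let f : [a,b] → ℝ be continuous and integrable on [a,b] with 0 ≤ a < b, let k > 1, and suppose |f|^{k/(k-1)} is (α,m)-convex for some fixed (α,m) ∈ (0,1]². Then for any fixed p, q > 0, ∫_a^b (x-a)^p (b-x)^q f(x) dx ≤ (b-a)^{p+q+1} (α+1)^{-(k-1)/k} [β(kp+1, kq+1)]^{1/k} [|f(a)|^{k/(k-1)} + α m |f(b/m)|^{k/(k-1)}]^{(k-1)/k}. -/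
open Real Set MeasureTheory intervalIntegral

/-!
Substituting `x = a + (b - a) t` turns the integral into
`(b - a)^(p+q+1) ∫₀¹ t^p (1 - t)^q f(a + (b - a) t) dt`. After replacing `f` by `|f|`, Hölder's
inequality with exponents `k` and `k/(k-1)` splits this into `β(kp+1, kq+1)^(1/k)` and the
`(k-1)/k`-th power of `∫₀¹ |f(a + (b - a) t)|^(k/(k-1)) dt`. Since `a + (b - a) t` is the
`(α,m)`-convex combination of `a` and `b/m` with weight `1 - t`, the last integrand is at most
`(1-t)^α |f a|^(k/(k-1)) + m (1 - (1-t)^α) |f (b/m)|^(k/(k-1))`, which integrates to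
`(|f a|^(k/(k-1)) + α m |f (b/m)|^(k/(k-1))) / (α + 1)`.
-/

theorem ContinuousOn.memLp_restrict_Icc {g : ℝ → ℝ} {a b : ℝ} (hg : ContinuousOn g (Icc a b))
    (r : ENNReal) : MemLp g r (volume.restrict (Icc a b)) := by
  obtain ⟨C, hC⟩ := isCompact_Icc.exists_bound_of_continuousOn hg
  exact (memLp_top_of_bound (hg.aestronglyMeasurable measurableSet_Icc) C
    (ae_restrict_of_forall_mem measurableSet_Icc hC)).mono_exponent le_top

namespace intervalIntegral

theorem integral_mul_le_Lp_mul_Lq_of_nonneg_of_continuousOn {a b k l : ℝ} (hab : a ≤ b)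
    (hkl : k.HolderConjugate l) {u v : ℝ → ℝ}
    (hu : ContinuousOn u (Icc a b)) (hv : ContinuousOn v (Icc a b))
    (hu0 : ∀ x ∈ Icc a b, 0 ≤ u x) (hv0 : ∀ x ∈ Icc a b, 0 ≤ v x) :
    ∫ x in a..b, u x * v x
      ≤ (∫ x in a..b, u x ^ k) ^ (1 / k) * (∫ x in a..b, v x ^ l) ^ (1 / l) := by
  have hsub : volume.restrict (Ioc a b) ≤ volume.restrict (Icc a b) :=
    Measure.restrict_mono Ioc_subset_Icc_self le_rfl
  have hnonneg {w : ℝ → ℝ} (hw : ∀ x ∈ Icc a b, 0 ≤ w x) : 0 ≤ᵐ[volume.restrict (Ioc a b)] w :=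
    ae_restrict_of_forall_mem measurableSet_Ioc fun x hx => hw x (Ioc_subset_Icc_self hx)
  simp only [integral_of_le hab]
  exact integral_mul_le_Lp_mul_Lq_of_nonneg hkl (hnonneg hu0) (hnonneg hv0)
    ((hu.memLp_restrict_Icc _).mono_measure hsub) ((hv.memLp_restrict_Icc _).mono_measure hsub)

theorem integral_mul_le_integral_mul_abs {a b : ℝ} (hab : a ≤ b) {w g : ℝ → ℝ}
    (hw : ∀ x ∈ Icc a b, 0 ≤ w x) :
    ∫ x in a..b, w x * g x ≤ ∫ x in a..b, w x * |g x| := by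
  refine (le_abs_self _).trans ((abs_integral_le_integral_abs hab).trans_eq ?_)
  refine integral_congr fun x hx => ?_
  rw [uIcc_of_le hab] at hx
  simp only [abs_mul, abs_of_nonneg (hw x hx)]

theorem integral_one_sub_rpow {α : ℝ} (hα : -1 < α) :
    ∫ t in (0:ℝ)..1, (1 - t) ^ α = 1 / (α + 1) := by
  rw [integral_comp_sub_left (fun x : ℝ => x ^ α) 1, sub_self, sub_zero,
    integral_rpow (Or.inl hα), one_rpow, zero_rpow (by linarith), sub_zero]

theorem integral_sub_rpow_mul_sub_rpow_mul {a b : ℝ} (hab : a < b) (p q : ℝ) (F : ℝ → ℝ) :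
    ∫ x in a..b, (x - a) ^ p * (b - x) ^ q * F x
      = (b - a) ^ (p + q + 1) * ∫ t in (0:ℝ)..1, t ^ p * (1 - t) ^ q * F (a + (b - a) * t) := by
  have hba : 0 < b - a := sub_pos.2 hab
  have hsub : ∫ x in a..b, (x - a) ^ p * (b - x) ^ q * F x
      = (b - a) * ∫ t in (0:ℝ)..1, (a + (b - a) * t - a) ^ p * (b - (a + (b - a) * t)) ^ q
          * F (a + (b - a) * t) := by
    rw [integral_comp_add_mul (fun x => (x - a) ^ p * (b - x) ^ q * F x) hba.ne' a]
    simp only [mul_zero, add_zero, mul_one, add_sub_cancel, smul_eq_mul]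
    field_simp
  rw [hsub, rpow_add hba, rpow_one, mul_comm _ (b - a), mul_assoc]
  congr 1
  rw [← integral_const_mul]
  refine integral_congr fun t ht => ?_
  rw [uIcc_of_le zero_le_one] at ht
  have h1 : a + (b - a) * t - a = (b - a) * t := by ring
  have h2 : b - (a + (b - a) * t) = (b - a) * (1 - t) := by ring
  simp only [h1, h2, mul_rpow hba.le ht.1, mul_rpow hba.le (sub_nonneg.2 ht.2), rpow_add hba]
  ring

end intervalIntegral

theorem integral_rpow_mul_one_sub_rpow_rpow (p q k : ℝ) :
    ∫ t in (0:ℝ)..1, (t ^ p * (1 - t) ^ q) ^ k = beta (k * p + 1) (k * q + 1) := by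
  refine intervalIntegral.integral_congr fun t ht => ?_
  rw [uIcc_of_le zero_le_one] at ht
  have h1t : 0 ≤ 1 - t := sub_nonneg.2 ht.2
  simp only [add_sub_cancel_right]
  rw [mul_rpow (rpow_nonneg ht.1 p) (rpow_nonneg h1t q), ← rpow_mul ht.1, ← rpow_mul h1t,
    mul_comm p k, mul_comm q k]

theorem beta_nonneg (x y : ℝ) : 0 ≤ beta x y :=
  intervalIntegral.integral_nonneg zero_le_one fun _ ht =>
    mul_nonneg (rpow_nonneg ht.1 _) (rpow_nonneg (sub_nonneg.2 ht.2) _)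

theorem integral_rpow_mul_one_sub_rpow_mul_le {p q k : ℝ} (hp : 0 ≤ p) (hq : 0 ≤ q) (hk : 1 < k)
    {g : ℝ → ℝ} (hg : ContinuousOn g (Icc 0 1)) :
    ∫ t in (0:ℝ)..1, t ^ p * (1 - t) ^ q * g t
      ≤ beta (k * p + 1) (k * q + 1) ^ (1 / k)
          * (∫ t in (0:ℝ)..1, |g t| ^ (k / (k - 1))) ^ ((k - 1) / k) := by
  have hu : ContinuousOn (fun t : ℝ => t ^ p * (1 - t) ^ q) (Icc 0 1) := by
    fun_prop (disch := assumption)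
  have hu0 : ∀ t ∈ Icc (0:ℝ) 1, 0 ≤ t ^ p * (1 - t) ^ q := fun t ht =>
    mul_nonneg (rpow_nonneg ht.1 p) (rpow_nonneg (sub_nonneg.2 ht.2) q)
  calc ∫ t in (0:ℝ)..1, t ^ p * (1 - t) ^ q * g t
      ≤ ∫ t in (0:ℝ)..1, t ^ p * (1 - t) ^ q * |g t| :=
        intervalIntegral.integral_mul_le_integral_mul_abs zero_le_one hu0
    _ ≤ (∫ t in (0:ℝ)..1, (t ^ p * (1 - t) ^ q) ^ k) ^ (1 / k)
          * (∫ t in (0:ℝ)..1, |g t| ^ (k / (k - 1))) ^ (1 / (k / (k - 1))) :=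
        intervalIntegral.integral_mul_le_Lp_mul_Lq_of_nonneg_of_continuousOn zero_le_one
          (Real.HolderConjugate.conjExponent hk) hu hg.abs hu0 fun _ _ => abs_nonneg _
    _ = _ := by rw [integral_rpow_mul_one_sub_rpow_rpow, one_div_div]

namespace AMConvexOn

variable {s : Set ℝ} {α m : ℝ} {g : ℝ → ℝ}

theorem apply_add_mul_sub_le (hg : AMConvexOn s α m g) (hm : m ≠ 0) {a b : ℝ} (ha : a ∈ s)
    (hb : b / m ∈ s) {t : ℝ} (ht : t ∈ Icc (0:ℝ) 1) :
    g (a + (b - a) * t) ≤ (1 - t) ^ α * g a + m * (1 - (1 - t) ^ α) * g (b / m) := by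
  have h := hg a ha (b / m) hb (1 - t) ⟨sub_nonneg.2 ht.2, sub_le_self _ ht.1⟩
  rwa [show (1 - t) * a + m * (1 - (1 - t)) * (b / m) = a + (b - a) * t by field_simp; ring] at h

theorem integral_comp_add_mul_le (hg : AMConvexOn s α m g) (hm : m ≠ 0) (hα : -1 < α)
    {a b : ℝ} (ha : a ∈ s) (hb : b / m ∈ s)
    (hint : IntervalIntegrable (fun t => g (a + (b - a) * t)) volume 0 1) :
    ∫ t in (0:ℝ)..1, g (a + (b - a) * t) ≤ (g a + α * m * g (b / m)) / (α + 1) := by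
  have hA : IntervalIntegrable (fun t : ℝ => (1 - t) ^ α) volume 0 1 := by
    simpa using (intervalIntegrable_rpow' hα (a := 1) (b := 0)).comp_sub_left 1
  have hα1 : α + 1 ≠ 0 := by linarith
  calc ∫ t in (0:ℝ)..1, g (a + (b - a) * t)
      ≤ ∫ t in (0:ℝ)..1, ((g a - m * g (b / m)) * (1 - t) ^ α + m * g (b / m)) :=
        integral_mono_on zero_le_one hint ((hA.const_mul _).add intervalIntegrable_const)
          fun t ht => (hg.apply_add_mul_sub_le hm ha hb ht).trans_eq (by ring)
    _ = (g a + α * m * g (b / m)) / (α + 1) := by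
        rw [integral_add (hA.const_mul _) intervalIntegrable_const,
          intervalIntegral.integral_const_mul, integral_one_sub_rpow hα,
          intervalIntegral.integral_const]
        field_simp
        ring

end AMConvexOn

theorem stmt5_general (a b p q : ℝ) (f : ℝ → ℝ)
    (ha : 0 ≤ a) (hab : a < b) (hp : 0 < p) (hq : 0 < q)
    (hcont : ContinuousOn f (Set.Icc a b))
    (k : ℝ) (hk : 1 < k)
    (α m : ℝ) (hα : α ∈ Set.Ioc (0:ℝ) 1) (hm : m ∈ Set.Ioc (0:ℝ) 1)
    (hf : AMConvexOn (Set.Icc 0 (b/m)) α m (fun x => |f x| ^ (k/(k-1)))) :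
    ∫ x in a..b, (x-a)^p * (b-x)^q * f x
      ≤ (b-a)^(p+q+1) * (α+1)^(-((k-1)/k)) * (beta (k*p+1) (k*q+1))^(1/k)
          * (|f a| ^ (k/(k-1)) + α * m * |f (b/m)| ^ (k/(k-1))) ^ ((k-1)/k) := by
  obtain ⟨hα0, -⟩ := hα
  obtain ⟨hm0, hm1⟩ := hm
  have hb : 0 < b := ha.trans_lt hab
  have hφ : MapsTo (fun t => a + (b - a) * t) (Icc 0 1) (Icc a b) := fun t ht =>
    ⟨by nlinarith [ht.1], by nlinarith [ht.2]⟩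
  have hfφ : ContinuousOn (fun t => f (a + (b - a) * t)) (Icc 0 1) :=
    hcont.comp (by fun_prop) hφ
  have hconv := hf.integral_comp_add_mul_le hm0.ne' (by linarith) (a := a) (b := b)
    ⟨ha, hab.le.trans (le_div_self hb.le hm0 hm1)⟩ ⟨by positivity, le_rfl⟩
    ((hfφ.abs.rpow_const fun _ _ => Or.inr (by positivity)).intervalIntegrable_of_Icc zero_le_one)
  have hIf : 0 ≤ ∫ t in (0:ℝ)..1, |f (a + (b - a) * t)| ^ (k / (k - 1)) :=
    intervalIntegral.integral_nonneg zero_le_one fun _ _ => rpow_nonneg (abs_nonneg _) _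
  rw [intervalIntegral.integral_sub_rpow_mul_sub_rpow_mul hab]
  calc (b - a) ^ (p + q + 1) * ∫ t in (0:ℝ)..1, t ^ p * (1 - t) ^ q * f (a + (b - a) * t)
      ≤ (b - a) ^ (p + q + 1) * (beta (k * p + 1) (k * q + 1) ^ (1 / k)
          * (∫ t in (0:ℝ)..1, |f (a + (b - a) * t)| ^ (k / (k - 1))) ^ ((k - 1) / k)) := by
        gcongr
        exact integral_rpow_mul_one_sub_rpow_mul_le hp.le hq.le hk hfφ
    _ ≤ (b - a) ^ (p + q + 1) * (beta (k * p + 1) (k * q + 1) ^ (1 / k)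
          * ((|f a| ^ (k / (k - 1)) + α * m * |f (b / m)| ^ (k / (k - 1))) / (α + 1))
            ^ ((k - 1) / k)) := by
        gcongr
        exact rpow_nonneg (beta_nonneg _ _) _
    _ = _ := by
        rw [div_rpow (by positivity) (by positivity), rpow_neg (by positivity)]
        ring

theorem stmt5 (a b p q : ℝ) (f : ℝ → ℝ)
    (ha : 0 ≤ a) (hab : a < b) (hp : 0 < p) (hq : 0 < q)
    (hcont : ContinuousOn f (Set.Icc a b))
    (hint : IntervalIntegrable f volume a b)
    (k : ℝ) (hk : 1 < k)
    (α m : ℝ) (hα : α ∈ Set.Ioc (0:ℝ) 1) (hm : m ∈ Set.Ioc (0:ℝ) 1)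
    (hf : AMConvexOn (Set.Icc 0 (b/m)) α m (fun x => |f x| ^ (k/(k-1)))) :
    ∫ x in a..b, (x-a)^p * (b-x)^q * f x
      ≤ (b-a)^(p+q+1) * (α+1)^(-((k-1)/k)) * (beta (k*p+1) (k*q+1))^(1/k)
          * (|f a| ^ (k/(k-1)) + α * m * |f (b/m)| ^ (k/(k-1))) ^ ((k-1)/k) :=
  stmt5_general a b p q f ha hab hp hq hcont k hk α m hα hm hf
end

section
/- Let f : [a,b] → ℝ be continuous and integrable on [a,b] with 0 ≤ a < b, let k > 1, and suppose |f|^{k/(k-1)} is (α,m)-convex for some fixed (α,m) ∈ (0,1]². Then for any fixed p, q > 0, ∫_a^b (x-a)^p (b-x)^q f(x) dx ≤ (b-a)^{p+q+1} (α+1)^{-(k-1)/k} [β(kp+1, kq+1)]^{1/k} [|f(b)|^{k/(k-1)} + α m |f(a/m)|^{k/(k-1)}]^{(k-1)/k}. -/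
/-!
Hölder's inequality with the exponents `k` and `k/(k-1)` separates the weight from `f`; after the
substitution `x = a + (b-a) t` the weight contributes a Beta integral. For the other factor, every
`x ∈ [a,b]` is `t b + m (1-t) (a/m)` with `t = (x-a)/(b-a)`, so the `(α,m)`-convexity of
`|f|^{k/(k-1)}` bounds it by `t^α |f b|^{k/(k-1)} + m (1-t^α) |f(a/m)|^{k/(k-1)}`, whose integral
follows from `∫₀¹ t^α dt = 1/(α+1)`.
-/

open Real Set MeasureTheory intervalIntegral

theorem intervalIntegral.integral_comp_sub_div_sub (h : ℝ → ℝ) (a b : ℝ) :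
    ∫ x in a..b, h ((x - a) / (b - a)) = (b - a) * ∫ t in (0:ℝ)..1, h t := by
  rcases eq_or_ne b a with rfl | hab
  · simp
  have hc : b - a ≠ 0 := sub_ne_zero.2 hab
  simp only [sub_div, integral_comp_div_sub h hc, sub_self, smul_eq_mul]
  rw [← sub_div, div_self hc]

theorem integral_rpow_zero_one {r : ℝ} (hr : -1 < r) :
    ∫ t in (0:ℝ)..1, t ^ r = 1 / (r + 1) := by
  rw [integral_rpow (Or.inl hr), one_rpow, zero_rpow (by linarith)]
  ring

theorem integral_sub_rpow_mul_rpow_sub {a b : ℝ} (hab : a < b) (r s : ℝ) :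
    ∫ x in a..b, (x - a) ^ r * (b - x) ^ s = (b - a) ^ (r + s + 1) * beta (r + 1) (s + 1) := by
  have hc : 0 < b - a := sub_pos.2 hab
  have hx : ∀ x, (x - a) ^ r * (b - x) ^ s
      = ((b - a) * ((x - a) / (b - a))) ^ r * ((b - a) * (1 - (x - a) / (b - a))) ^ s := by
    intro x
    field_simp
    ring_nf
  have hpull : ∫ t in (0:ℝ)..1, ((b - a) * t) ^ r * ((b - a) * (1 - t)) ^ s
      = ∫ t in (0:ℝ)..1, (b - a) ^ (r + s) * (t ^ r * (1 - t) ^ s) := by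
    refine intervalIntegral.integral_congr fun t ht => ?_
    rw [uIcc_of_le zero_le_one] at ht
    simp only [mul_rpow hc.le ht.1, mul_rpow hc.le (sub_nonneg.2 ht.2), rpow_add hc]
    ring
  simp only [hx, integral_comp_sub_div_sub fun t => ((b - a) * t) ^ r * ((b - a) * (1 - t)) ^ s,
    hpull, intervalIntegral.integral_const_mul, beta, add_sub_cancel_right, rpow_add_one hc.ne']
  ring

theorem ContinuousOn.memLp_restrict_of_isCompact {X : Type*} [TopologicalSpace X]
    [MeasurableSpace X] [OpensMeasurableSpace X] {μ : Measure X} [IsFiniteMeasureOnCompacts μ]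
    {s : Set X} (hs : IsCompact s) (hms : MeasurableSet s) {f : X → ℝ} (hf : ContinuousOn f s)
    (p : ENNReal) : MemLp f p (μ.restrict s) := by
  have : IsFiniteMeasure (μ.restrict s) := isFiniteMeasure_restrict.2 hs.measure_lt_top.ne
  obtain ⟨C, hC⟩ := hs.exists_bound_of_continuousOn hf
  exact MemLp.of_bound (hf.aestronglyMeasurable hms) C
    ((ae_restrict_iff' hms).2 (ae_of_all _ hC))

theorem intervalIntegral.integral_mul_le_Lp_mul_Lq_of_continuousOn {a b p q : ℝ}
    {f g : ℝ → ℝ} (hab : a ≤ b) (hpq : p.HolderConjugate q)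
    (hf : ContinuousOn f (Icc a b)) (hg : ContinuousOn g (Icc a b))
    (hf0 : ∀ x ∈ Icc a b, 0 ≤ f x) (hg0 : ∀ x ∈ Icc a b, 0 ≤ g x) :
    ∫ x in a..b, f x * g x
      ≤ (∫ x in a..b, f x ^ p) ^ (1 / p) * (∫ x in a..b, g x ^ q) ^ (1 / q) := by
  simp only [integral_of_le hab, ← integral_Icc_eq_integral_Ioc]
  exact integral_mul_le_Lp_mul_Lq_of_nonneg hpq
    ((ae_restrict_iff' measurableSet_Icc).2 (ae_of_all _ hf0))
    ((ae_restrict_iff' measurableSet_Icc).2 (ae_of_all _ hg0))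
    (hf.memLp_restrict_of_isCompact isCompact_Icc measurableSet_Icc _)
    (hg.memLp_restrict_of_isCompact isCompact_Icc measurableSet_Icc _)

theorem integral_sub_rpow_mul_rpow_sub_mul_le {a b p q k K : ℝ} {f : ℝ → ℝ} (hab : a < b)
    (hp : 0 ≤ p) (hq : 0 ≤ q) (hkK : k.HolderConjugate K) (hf : ContinuousOn f (Icc a b)) :
    ∫ x in a..b, (x - a) ^ p * (b - x) ^ q * f x
      ≤ ((b - a) ^ (k * p + k * q + 1) * beta (k * p + 1) (k * q + 1)) ^ (1 / k)
          * (∫ x in a..b, |f x| ^ K) ^ (1 / K) := by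
  have hw : ContinuousOn (fun x => (x - a) ^ p * (b - x) ^ q) (Icc a b) := by
    have := continuous_rpow_const hp
    have := continuous_rpow_const hq
    exact Continuous.continuousOn (by fun_prop)
  have hw0 : ∀ x ∈ Icc a b, 0 ≤ (x - a) ^ p * (b - x) ^ q := fun x hx =>
    mul_nonneg (rpow_nonneg (by linarith [hx.1]) _) (rpow_nonneg (by linarith [hx.2]) _)
  have hwk : ∫ x in a..b, ((x - a) ^ p * (b - x) ^ q) ^ k
      = (b - a) ^ (k * p + k * q + 1) * beta (k * p + 1) (k * q + 1) := by
    rw [← integral_sub_rpow_mul_rpow_sub hab]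
    refine intervalIntegral.integral_congr fun x hx => ?_
    rw [uIcc_of_le hab.le] at hx
    have h1 : 0 ≤ x - a := by linarith [hx.1]
    have h2 : 0 ≤ b - x := by linarith [hx.2]
    rw [mul_rpow (rpow_nonneg h1 _) (rpow_nonneg h2 _), ← rpow_mul h1, ← rpow_mul h2,
      mul_comm p, mul_comm q]
  calc ∫ x in a..b, (x - a) ^ p * (b - x) ^ q * f x
      ≤ ∫ x in a..b, (x - a) ^ p * (b - x) ^ q * |f x| :=
        intervalIntegral.integral_mono_on hab.le ((hw.mul hf).intervalIntegrable_of_Icc hab.le)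
          ((hw.mul hf.abs).intervalIntegrable_of_Icc hab.le)
          fun x hx => mul_le_mul_of_nonneg_left (le_abs_self _) (hw0 x hx)
    _ ≤ _ := by
        rw [← hwk]
        exact integral_mul_le_Lp_mul_Lq_of_continuousOn hab.le hkK hw hf.abs hw0
          fun x _ => abs_nonneg _

namespace AMConvexOn

variable {s : Set ℝ} {α m : ℝ} {g : ℝ → ℝ} {a b : ℝ}

theorem le_of_mem_Icc (hg : AMConvexOn s α m g) (hm : m ≠ 0) (hb : b ∈ s) (ha : a / m ∈ s)
    (hab : a < b) {x : ℝ} (hx : x ∈ Icc a b) :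
    g x ≤ ((x - a) / (b - a)) ^ α * g b + m * (1 - ((x - a) / (b - a)) ^ α) * g (a / m) := by
  have hc : 0 < b - a := sub_pos.2 hab
  have ht : (x - a) / (b - a) ∈ Icc (0:ℝ) 1 :=
    ⟨div_nonneg (by linarith [hx.1]) hc.le, (div_le_one hc).2 (by linarith [hx.2])⟩
  convert hg b hb (a / m) ha _ ht using 2
  field_simp
  ring

theorem intervalIntegral_le (hg : AMConvexOn s α m g) (hm : m ≠ 0) (hb : b ∈ s)
    (ha : a / m ∈ s) (hab : a < b) (hα : 0 ≤ α) (hgi : IntervalIntegrable g volume a b) :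
    ∫ x in a..b, g x ≤ (b - a) / (α + 1) * (g b + α * m * g (a / m)) := by
  set bound : ℝ → ℝ := fun t => t ^ α * g b + m * (1 - t ^ α) * g (a / m)
  have hbound : Continuous bound := by
    have := continuous_rpow_const hα
    fun_prop
  calc ∫ x in a..b, g x ≤ ∫ x in a..b, bound ((x - a) / (b - a)) :=
        integral_mono_on hab.le hgi ((by fun_prop : Continuous _).intervalIntegrable _ _)
          fun x hx => hg.le_of_mem_Icc hm hb ha hab hx
    _ = (b - a) * ∫ t in (0:ℝ)..1, bound t := integral_comp_sub_div_sub bound a b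
    _ = _ := by
      have hr := intervalIntegrable_rpow' (a := 0) (b := 1) (by linarith : -1 < α)
      have hbound' : bound = fun t => (g b - m * g (a / m)) * t ^ α + m * g (a / m) := by
        funext t
        simp only [bound]
        ring
      rw [hbound', intervalIntegral.integral_add (hr.const_mul _) intervalIntegrable_const,
        intervalIntegral.integral_const_mul, integral_rpow_zero_one (by linarith),
        intervalIntegral.integral_const, smul_eq_mul]
      field_simp
      ring

end AMConvexOn

theorem stmt6_general (a b p q : ℝ) (f : ℝ → ℝ)
    (ha : 0 ≤ a) (hab : a < b) (hp : 0 < p) (hq : 0 < q)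
    (hcont : ContinuousOn f (Set.Icc a b))
    (k : ℝ) (hk : 1 < k)
    (α m : ℝ) (hα : α ∈ Set.Ioc (0:ℝ) 1) (hm : m ∈ Set.Ioc (0:ℝ) 1)
    (hf : AMConvexOn (Set.Icc 0 (max b (a/m))) α m (fun x => |f x| ^ (k/(k-1)))) :
    ∫ x in a..b, (x-a)^p * (b-x)^q * f x
      ≤ (b-a)^(p+q+1) * (α+1)^(-((k-1)/k)) * (beta (k*p+1) (k*q+1))^(1/k)
          * (|f b| ^ (k/(k-1)) + α * m * |f (a/m)| ^ (k/(k-1))) ^ ((k-1)/k) := by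
  obtain ⟨hα0, -⟩ := hα
  obtain ⟨hm0, -⟩ := hm
  set K := k / (k - 1)
  have hK : k.HolderConjugate K := (Real.holderConjugate_iff_eq_conjExponent hk).2 rfl
  have hc : 0 < b - a := sub_pos.2 hab
  have hα1 : 0 < α + 1 := by linarith
  have hfK : ContinuousOn (fun x => |f x| ^ K) (Icc a b) :=
    (continuous_rpow_const hK.symm.nonneg).comp_continuousOn hcont.abs
  have hbound : ∫ x in a..b, |f x| ^ K
      ≤ (b - a) / (α + 1) * (|f b| ^ K + α * m * |f (a / m)| ^ K) :=
    hf.intervalIntegral_le hm0.ne' ⟨hab.le.trans' ha, le_max_left _ _⟩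
      ⟨div_nonneg ha hm0.le, le_max_right _ _⟩ hab hα0.le
      (hfK.intervalIntegrable_of_Icc hab.le)
  have hpow : (b - a) ^ ((k * p + k * q + 1) * (1 / k)) * (b - a) ^ ((k - 1) / k)
      = (b - a) ^ (p + q + 1) := by
    rw [← rpow_add hc]
    congr 1
    field_simp
    ring
  calc _ ≤ _ := integral_sub_rpow_mul_rpow_sub_mul_le hab hp.le hq.le hK hcont
    _ ≤ _ := mul_le_mul_of_nonneg_left (rpow_le_rpow (intervalIntegral.integral_nonneg hab.le
          fun x _ => rpow_nonneg (abs_nonneg _) _) hbound (by positivity))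
          (rpow_nonneg (mul_nonneg (by positivity) (beta_nonneg _ _)) _)
    _ = _ := by
        rw [one_div_div, mul_rpow (by positivity) (beta_nonneg _ _), mul_rpow (by positivity)
          (by positivity), div_rpow hc.le hα1.le, ← rpow_mul hc.le, rpow_neg hα1.le, ← hpow]
        ring

theorem stmt6 (a b p q : ℝ) (f : ℝ → ℝ)
    (ha : 0 ≤ a) (hab : a < b) (hp : 0 < p) (hq : 0 < q)
    (hcont : ContinuousOn f (Set.Icc a b))
    (hint : IntervalIntegrable f volume a b)
    (k : ℝ) (hk : 1 < k)
    (α m : ℝ) (hα : α ∈ Set.Ioc (0:ℝ) 1) (hm : m ∈ Set.Ioc (0:ℝ) 1)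
    (hf : AMConvexOn (Set.Icc 0 (max b (a/m))) α m (fun x => |f x| ^ (k/(k-1)))) :
    ∫ x in a..b, (x-a)^p * (b-x)^q * f x
      ≤ (b-a)^(p+q+1) * (α+1)^(-((k-1)/k)) * (beta (k*p+1) (k*q+1))^(1/k)
          * (|f b| ^ (k/(k-1)) + α * m * |f (a/m)| ^ (k/(k-1))) ^ ((k-1)/k) :=
  stmt6_general a b p q f ha hab hp hq hcont k hk α m hα hm hf
end

section
/- Let f : [a,b] → ℝ be continuous and integrable on [a,b] with 0 ≤ a < b, let l ≥ 1, and suppose |f|^l is m-convex for some fixed m ∈ (0,1]. Then for any fixed p, q > 0, ∫_a^b (x-a)^p (b-x)^q f(x) dx ≤ (b-a)^{p+q+1} [β(p+1, q+1)]^{(l-1)/l} [β(q+2, p+1)|f(a)|^l + m β(q+1, p+2)|f(b/m)|^l]^{1/l}. -/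
open Real Set MeasureTheory intervalIntegral

def MConvexOn (s : Set ℝ) (m : ℝ) (g : ℝ → ℝ) : Prop :=
  ∀ x ∈ s, ∀ y ∈ s, ∀ t ∈ Set.Icc (0:ℝ) 1, g (t*x + m*(1-t)*y) ≤ t * g x + m*(1-t) * g y

theorem beta_comm (x y : ℝ) : beta x y = beta y x := by
  have h := integral_comp_sub_left (a := 0) (b := 1) (fun t => t ^ (x - 1) * (1 - t) ^ (y - 1)) 1
  simp only [sub_zero, sub_self, sub_sub_cancel] at h
  rw [beta, beta, ← h]
  exact integral_congr fun t _ => mul_comm _ _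

theorem integral_sub_rpow_mul_sub_rpow {a b : ℝ} (hab : a < b) (α γ : ℝ) :
    ∫ x in a..b, (x - a) ^ α * (b - x) ^ γ = (b - a) ^ (α + γ + 1) * beta (α + 1) (γ + 1) := by
  have hc : 0 < b - a := sub_pos.2 hab
  have h := smul_integral_comp_mul_add (a := 0) (b := 1) (fun x => (x - a) ^ α * (b - x) ^ γ)
    (b - a) a
  simp only [mul_zero, zero_add, mul_one, sub_add_cancel, smul_eq_mul] at h
  rw [← h, beta, add_sub_cancel_right, add_sub_cancel_right, rpow_add_one hc.ne',
    mul_comm _ (b - a), mul_assoc]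
  congr 1
  rw [← intervalIntegral.integral_const_mul]
  refine intervalIntegral.integral_congr fun t ht => ?_
  rw [uIcc_of_le zero_le_one] at ht
  rw [show (b - a) * t + a - a = (b - a) * t by ring,
    show b - ((b - a) * t + a) = (b - a) * (1 - t) by ring,
    mul_rpow hc.le ht.1, mul_rpow hc.le (sub_nonneg.2 ht.2), rpow_add hc]
  ring

theorem continuous_sub_rpow_mul_sub_rpow (a b : ℝ) {p q : ℝ} (hp : 0 ≤ p) (hq : 0 ≤ q) :
    Continuous fun x : ℝ => (x - a) ^ p * (b - x) ^ q :=
  ((continuous_id.sub continuous_const).rpow_const fun _ => Or.inr hp).mul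
    ((continuous_const.sub continuous_id).rpow_const fun _ => Or.inr hq)

theorem integral_sub_rpow_mul_sub_rpow_mul_chord {a b : ℝ} (hab : a < b) {p q : ℝ} (hp : 0 ≤ p)
    (hq : 0 ≤ q) (A B : ℝ) :
    ∫ x in a..b, (x - a) ^ p * (b - x) ^ q * ((b - x) / (b - a) * A + (x - a) / (b - a) * B)
      = (b - a) ^ (p + q + 1) * (beta (q + 2) (p + 1) * A + beta (q + 1) (p + 2) * B) := by
  have hc : 0 < b - a := sub_pos.2 hab
  have hsplit : ∀ x ∈ uIcc a b,
      (x - a) ^ p * (b - x) ^ q * ((b - x) / (b - a) * A + (x - a) / (b - a) * B)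
        = A / (b - a) * ((x - a) ^ p * (b - x) ^ (q + 1))
          + B / (b - a) * ((x - a) ^ (p + 1) * (b - x) ^ q) := by
    intro x hx
    rw [uIcc_of_le hab.le] at hx
    rw [rpow_add_one' (sub_nonneg.2 hx.2) (by positivity),
      rpow_add_one' (sub_nonneg.2 hx.1) (by positivity)]
    field_simp
  have hint₁ : IntervalIntegrable (fun x => (x - a) ^ p * (b - x) ^ (q + 1)) volume a b :=
    (continuous_sub_rpow_mul_sub_rpow a b hp (by positivity)).intervalIntegrable a b
  have hint₂ : IntervalIntegrable (fun x => (x - a) ^ (p + 1) * (b - x) ^ q) volume a b :=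
    (continuous_sub_rpow_mul_sub_rpow a b (by positivity) hq).intervalIntegrable a b
  rw [integral_congr hsplit, integral_add (hint₁.const_mul _) (hint₂.const_mul _),
    intervalIntegral.integral_const_mul, intervalIntegral.integral_const_mul,
    integral_sub_rpow_mul_sub_rpow hab, integral_sub_rpow_mul_sub_rpow hab,
    beta_comm (p + 1), beta_comm (p + 1 + 1), show q + 1 + 1 = q + 2 by ring,
    show p + 1 + 1 = p + 2 by ring, show p + (q + 1) + 1 = p + q + 1 + 1 by ring,
    show p + 1 + q + 1 = p + q + 1 + 1 by ring, rpow_add_one hc.ne']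
  field_simp

theorem MConvexOn.le_chord {s : Set ℝ} {m : ℝ} {g : ℝ → ℝ} (hg : MConvexOn s m g) (hm : m ≠ 0)
    {a b x : ℝ} (ha : a ∈ s) (hb : b / m ∈ s) (hab : a < b) (hx : x ∈ Icc a b) :
    g x ≤ (b - x) / (b - a) * g a + (x - a) / (b - a) * (m * g (b / m)) := by
  have hc : 0 < b - a := sub_pos.2 hab
  have ht : (b - x) / (b - a) ∈ Icc (0:ℝ) 1 :=
    ⟨div_nonneg (sub_nonneg.2 hx.2) hc.le, (div_le_one hc).2 (by linarith [hx.1])⟩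
  have key := hg a ha (b / m) hb _ ht
  have h1t : 1 - (b - x) / (b - a) = (x - a) / (b - a) := by field_simp; ring
  rw [h1t, show (b - x) / (b - a) * a + m * ((x - a) / (b - a)) * (b / m) = x by
    field_simp; ring] at key
  linarith

theorem MConvexOn.integral_sub_rpow_mul_sub_rpow_mul_le {a b p q m : ℝ} {g : ℝ → ℝ}
    (hg : MConvexOn (Icc 0 (b / m)) m g) (hgc : ContinuousOn g (Icc a b)) (ha : 0 ≤ a)
    (hab : a < b) (hp : 0 ≤ p) (hq : 0 ≤ q) (hm : m ∈ Ioc 0 1) :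
    ∫ x in a..b, (x - a) ^ p * (b - x) ^ q * g x
      ≤ (b - a) ^ (p + q + 1)
        * (beta (q + 2) (p + 1) * g a + m * beta (q + 1) (p + 2) * g (b / m)) := by
  have hbm : b ≤ b / m := le_div_self (ha.trans hab.le) hm.1 hm.2
  have hw := continuous_sub_rpow_mul_sub_rpow a b hp hq
  calc ∫ x in a..b, (x - a) ^ p * (b - x) ^ q * g x
      ≤ ∫ x in a..b, (x - a) ^ p * (b - x) ^ q
          * ((b - x) / (b - a) * g a + (x - a) / (b - a) * (m * g (b / m))) :=
        integral_mono_on hab.le ((hw.continuousOn.mul hgc).intervalIntegrable_of_Icc hab.le)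
          ((hw.mul (by fun_prop)).intervalIntegrable a b) fun x hx =>
            mul_le_mul_of_nonneg_left
              (hg.le_chord hm.1.ne' ⟨ha, by linarith⟩ ⟨by linarith, le_rfl⟩ hab hx)
              (mul_nonneg (rpow_nonneg (sub_nonneg.2 hx.1) _) (rpow_nonneg (sub_nonneg.2 hx.2) _))
    _ = _ := by rw [integral_sub_rpow_mul_sub_rpow_mul_chord hab hp hq]; ring

theorem memLp_ofReal_of_integrable_rpow {α : Type*} [MeasurableSpace α] {μ : Measure α}
    {r : ℝ} (hr : 0 < r) {F : α → ℝ} (hF : 0 ≤ᵐ[μ] F) (hFm : AEStronglyMeasurable F μ)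
    (hFr : Integrable (fun x => F x ^ r) μ) : MemLp F (ENNReal.ofReal r) μ := by
  rw [← integrable_norm_rpow_iff hFm (by simpa using hr) ENNReal.ofReal_ne_top,
    ENNReal.toReal_ofReal hr.le]
  refine hFr.congr ?_
  filter_upwards [hF] with x hx
  rw [Real.norm_of_nonneg hx]

theorem MeasureTheory.integral_mul_le_weight_mul_Lp_of_nonneg {α : Type*} [MeasurableSpace α]
    {μ : Measure α} {l : ℝ} (hl : 1 ≤ l) {w g : α → ℝ} (hw : 0 ≤ᵐ[μ] w) (hg : 0 ≤ᵐ[μ] g)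
    (hwi : Integrable w μ) (hgm : AEStronglyMeasurable g μ)
    (hwgl : Integrable (fun x => w x * g x ^ l) μ) :
    ∫ x, w x * g x ∂μ ≤ (∫ x, w x ∂μ) ^ ((l - 1) / l) * (∫ x, w x * g x ^ l ∂μ) ^ (1 / l) := by
  obtain rfl | hl := hl.eq_or_lt
  · simp
  have hl0 : 0 < l := one_pos.trans hl
  set r := l.conjExponent
  have hrl : r.HolderConjugate l := (Real.HolderConjugate.conjExponent hl).symm
  have hr : 1 / r = (l - 1) / l := by rw [show r = l / (l - 1) from rfl, one_div_div]
  have hrl' : 1 / r + 1 / l = 1 := by simpa only [one_div] using hrl.inv_add_inv_eq_one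
  have hFnn : 0 ≤ᵐ[μ] fun x => w x ^ (1 / r) := hw.mono fun x hx => rpow_nonneg hx _
  have hGnn : 0 ≤ᵐ[μ] fun x => w x ^ (1 / l) * g x := by
    filter_upwards [hw, hg] with x hx hgx using mul_nonneg (rpow_nonneg hx _) hgx
  have hF : (fun x => (w x ^ (1 / r)) ^ r) =ᵐ[μ] w := by
    filter_upwards [hw] with x hx
    rw [← rpow_mul hx, one_div_mul_cancel hrl.pos.ne', rpow_one]
  have hG : (fun x => (w x ^ (1 / l) * g x) ^ l) =ᵐ[μ] fun x => w x * g x ^ l := by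
    filter_upwards [hw, hg] with x hx hgx
    rw [mul_rpow (rpow_nonneg hx _) hgx, ← rpow_mul hx, one_div_mul_cancel hl0.ne', rpow_one]
  have hFG : (fun x => w x ^ (1 / r) * (w x ^ (1 / l) * g x)) =ᵐ[μ] fun x => w x * g x := by
    filter_upwards [hw] with x hx
    rw [← mul_assoc, ← rpow_add' hx (by rw [hrl']; exact one_ne_zero), hrl', rpow_one]
  have holder := integral_mul_le_Lp_mul_Lq_of_nonneg hrl hFnn hGnn
    (memLp_ofReal_of_integrable_rpow hrl.pos hFnn
      (hwi.1.aemeasurable.pow_const _).aestronglyMeasurable (hwi.congr hF.symm))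
    (memLp_ofReal_of_integrable_rpow hl0 hGnn
      ((hwi.1.aemeasurable.pow_const _).aestronglyMeasurable.mul hgm) (hwgl.congr hG.symm))
  rwa [integral_congr_ae hFG, integral_congr_ae hF, integral_congr_ae hG, hr] at holder

theorem intervalIntegral.integral_mul_le_weight_mul_Lp_of_nonneg {a b l : ℝ} (hab : a ≤ b)
    (hl : 1 ≤ l) {w g : ℝ → ℝ} (hw : ∀ x ∈ Ioc a b, 0 ≤ w x) (hg : ∀ x ∈ Ioc a b, 0 ≤ g x)
    (hwi : IntervalIntegrable w volume a b)
    (hgm : AEStronglyMeasurable g (volume.restrict (Ioc a b)))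
    (hwgl : IntervalIntegrable (fun x => w x * g x ^ l) volume a b) :
    ∫ x in a..b, w x * g x
      ≤ (∫ x in a..b, w x) ^ ((l - 1) / l) * (∫ x in a..b, w x * g x ^ l) ^ (1 / l) := by
  simp only [integral_of_le hab]
  exact MeasureTheory.integral_mul_le_weight_mul_Lp_of_nonneg hl
    ((ae_restrict_mem measurableSet_Ioc).mono hw) ((ae_restrict_mem measurableSet_Ioc).mono hg)
    hwi.1 hgm hwgl.1

theorem mul_rpow_mul_mul_rpow_of_add_eq_one {c x y s t : ℝ} (hc : 0 ≤ c) (hx : 0 ≤ x)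
    (hy : 0 ≤ y) (hst : s + t = 1) : (c * x) ^ s * (c * y) ^ t = c * x ^ s * y ^ t := by
  rw [mul_rpow hc hx, mul_rpow hc hy, mul_mul_mul_comm,
    ← rpow_add' hc (by rw [hst]; exact one_ne_zero), hst, rpow_one, mul_assoc]

theorem stmt11_general (a b p q : ℝ) (f : ℝ → ℝ)
    (ha : 0 ≤ a) (hab : a < b) (hp : 0 < p) (hq : 0 < q)
    (hcont : ContinuousOn f (Set.Icc a b))
    (l : ℝ) (hl : 1 ≤ l)
    (m : ℝ) (hm : m ∈ Set.Ioc (0:ℝ) 1)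
    (hf : MConvexOn (Set.Icc 0 (b/m)) m (fun x => |f x| ^ l)) :
    ∫ x in a..b, (x-a)^p * (b-x)^q * f x
      ≤ (b-a)^(p+q+1) * (beta (p+1) (q+1))^((l-1)/l)
          * (beta (q+2) (p+1) * |f a| ^ l + m * beta (q+1) (p+2) * |f (b/m)| ^ l) ^ (1/l) := by
  have hw := continuous_sub_rpow_mul_sub_rpow a b hp.le hq.le
  have hw0 : ∀ x ∈ Icc a b, 0 ≤ (x - a) ^ p * (b - x) ^ q := fun x hx =>
    mul_nonneg (rpow_nonneg (sub_nonneg.2 hx.1) _) (rpow_nonneg (sub_nonneg.2 hx.2) _)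
  have hfl : ContinuousOn (fun x => |f x| ^ l) (Icc a b) :=
    hcont.abs.rpow_const fun _ _ => Or.inr (zero_le_one.trans hl)
  have hmoment := hf.integral_sub_rpow_mul_sub_rpow_mul_le hfl ha hab hp.le hq.le hm
  calc ∫ x in a..b, (x - a) ^ p * (b - x) ^ q * f x
      ≤ ∫ x in a..b, (x - a) ^ p * (b - x) ^ q * |f x| :=
        integral_mono_on hab.le ((hw.continuousOn.mul hcont).intervalIntegrable_of_Icc hab.le)
          ((hw.continuousOn.mul hcont.abs).intervalIntegrable_of_Icc hab.le) fun x hx =>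
            mul_le_mul_of_nonneg_left (le_abs_self _) (hw0 x hx)
    _ ≤ (∫ x in a..b, (x - a) ^ p * (b - x) ^ q) ^ ((l - 1) / l)
        * (∫ x in a..b, (x - a) ^ p * (b - x) ^ q * |f x| ^ l) ^ (1 / l) :=
      intervalIntegral.integral_mul_le_weight_mul_Lp_of_nonneg hab.le hl
        (fun x hx => hw0 x (Ioc_subset_Icc_self hx)) (fun _ _ => abs_nonneg _)
        (hw.intervalIntegrable a b)
        ((hcont.abs.mono Ioc_subset_Icc_self).aestronglyMeasurable measurableSet_Ioc)
        ((hw.continuousOn.mul hfl).intervalIntegrable_of_Icc hab.le)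
    _ ≤ ((b - a) ^ (p + q + 1) * beta (p + 1) (q + 1)) ^ ((l - 1) / l)
        * ((b - a) ^ (p + q + 1)
          * (beta (q + 2) (p + 1) * |f a| ^ l + m * beta (q + 1) (p + 2) * |f (b / m)| ^ l))
          ^ (1 / l) := by
      rw [integral_sub_rpow_mul_sub_rpow hab]
      gcongr
      · exact rpow_nonneg (mul_nonneg (by positivity) (beta_nonneg _ _)) _
      · exact intervalIntegral.integral_nonneg hab.le fun x hx =>
          mul_nonneg (hw0 x hx) (rpow_nonneg (abs_nonneg _) _)
    _ = _ := mul_rpow_mul_mul_rpow_of_add_eq_one (by positivity) (beta_nonneg _ _)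
        (by
          have := hm.1; have := beta_nonneg (q + 2) (p + 1); have := beta_nonneg (q + 1) (p + 2)
          positivity)
        (by field_simp; ring)

theorem stmt11 (a b p q : ℝ) (f : ℝ → ℝ)
    (ha : 0 ≤ a) (hab : a < b) (hp : 0 < p) (hq : 0 < q)
    (hcont : ContinuousOn f (Set.Icc a b))
    (hint : IntervalIntegrable f volume a b)
    (l : ℝ) (hl : 1 ≤ l)
    (m : ℝ) (hm : m ∈ Set.Ioc (0:ℝ) 1)
    (hf : MConvexOn (Set.Icc 0 (b/m)) m (fun x => |f x| ^ l)) :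
    ∫ x in a..b, (x-a)^p * (b-x)^q * f x
      ≤ (b-a)^(p+q+1) * (beta (p+1) (q+1))^((l-1)/l)
          * (beta (q+2) (p+1) * |f a| ^ l + m * beta (q+1) (p+2) * |f (b/m)| ^ l) ^ (1/l) :=
  stmt11_general a b p q f ha hab hp hq hcont l hl m hm hf
end

section
/- Let f : I ⊆ ℝ → ℝ be differentiable on I, a, b ∈ I with a < b, and suppose |f'| is quasi-convex on [a,b]. Then |(f(a)+f(b))/2 − (1/(b-a))∫_a^b f(u) du| ≤ ((b-a)/4) max{|f'(a)|, |f'(b)|}. -/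
/-!
Integrating by parts against the kernel `x - (a + b) / 2` gives
`(f a + f b) / 2 - (b - a)⁻¹ ∫ f = (b - a)⁻¹ ∫ (x - (a + b) / 2) f' x`.
Quasi-convexity bounds `|f'|` on `[a, b]` by `max |f' a| |f' b|`, and
`∫ |x - (a + b) / 2| = (b - a)² / 4` finishes the estimate.
-/

open Real Set MeasureTheory intervalIntegral

open scoped Interval

def QuasiConvexOn' (s : Set ℝ) (g : ℝ → ℝ) : Prop :=
  ∀ x ∈ s, ∀ y ∈ s, ∀ lam ∈ Set.Icc (0:ℝ) 1, g (lam*x + (1-lam)*y) ≤ max (g x) (g y)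

theorem QuasiConvexOn'.le_max_of_mem_Icc {g : ℝ → ℝ} {a b x : ℝ}
    (hg : QuasiConvexOn' (Icc a b) g) (hab : a ≤ b) (hx : x ∈ Icc a b) :
    g x ≤ max (g a) (g b) := by
  rw [← segment_eq_Icc hab] at hx
  obtain ⟨s, t, hs, ht, hst, rfl⟩ := hx
  obtain rfl : t = 1 - s := by linarith
  exact hg a (left_mem_Icc.2 hab) b (right_mem_Icc.2 hab) s ⟨hs, by linarith⟩

theorem intervalIntegrable_of_hasDerivAt_of_abs_le {f f' : ℝ → ℝ} {a b M : ℝ}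
    (hf : ∀ x ∈ uIcc a b, HasDerivAt f (f' x) x) (hM : ∀ x ∈ uIcc a b, |f' x| ≤ M) :
    IntervalIntegrable f' volume a b := by
  have hae : deriv f =ᵐ[volume.restrict (Ι a b)] f' := by
    filter_upwards [ae_restrict_mem measurableSet_uIoc] with x hx
    exact (hf x (uIoc_subset_uIcc hx)).deriv
  refine (intervalIntegrable_const (c := M)).mono_fun'
    ((measurable_deriv f).aestronglyMeasurable.congr hae) ?_
  filter_upwards [ae_restrict_mem measurableSet_uIoc] with x hx
  exact hM x (uIoc_subset_uIcc hx)

theorem integral_sub_midpoint_mul_deriv {f f' : ℝ → ℝ} {a b : ℝ}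
    (hf : ∀ x ∈ uIcc a b, HasDerivAt f (f' x) x) (hf' : IntervalIntegrable f' volume a b) :
    ∫ x in a..b, (x - (a + b) / 2) * f' x = (b - a) / 2 * (f a + f b) - ∫ x in a..b, f x := by
  have h := integral_mul_deriv_eq_deriv_mul (fun x _ => (hasDerivAt_id x).sub_const ((a + b) / 2))
    hf intervalIntegrable_const hf'
  simp only [one_mul, id] at h
  rw [h]
  ring

theorem integral_abs_sub_midpoint {a b : ℝ} (hab : a ≤ b) :
    ∫ x in a..b, |x - (a + b) / 2| = (b - a) ^ 2 / 4 := by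
  set c := (a + b) / 2 with hc
  have hcont : Continuous fun x => |x - c| := by fun_prop
  rw [← integral_add_adjacent_intervals (hcont.intervalIntegrable a c) (hcont.intervalIntegrable c b)]
  have hleft : ∫ x in a..c, |x - c| = ∫ x in a..c, (c - x) := by
    refine integral_congr fun x hx => ?_
    rw [uIcc_of_le (by linarith)] at hx
    simp only [abs_of_nonpos (sub_nonpos.2 hx.2), neg_sub]
  have hright : ∫ x in c..b, |x - c| = ∫ x in c..b, (x - c) := by
    refine integral_congr fun x hx => ?_
    rw [uIcc_of_le (by linarith)] at hx
    simp only [abs_of_nonneg (sub_nonneg.2 hx.1)]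
  rw [hleft, hright, integral_comp_sub_left (fun x => x), integral_comp_sub_right (fun x => x),
    integral_id, integral_id]
  ring

theorem abs_integral_sub_midpoint_mul_le {f' : ℝ → ℝ} {a b M : ℝ} (hab : a ≤ b)
    (hM : ∀ x ∈ Icc a b, |f' x| ≤ M) :
    |∫ x in a..b, (x - (a + b) / 2) * f' x| ≤ (b - a) ^ 2 / 4 * M := by
  have hle : ∀ᵐ x, x ∈ Ioc a b → ‖(x - (a + b) / 2) * f' x‖ ≤ |x - (a + b) / 2| * M := by
    refine .of_forall fun x hx => ?_
    rw [norm_mul, Real.norm_eq_abs, Real.norm_eq_abs]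
    exact mul_le_mul_of_nonneg_left (hM x (Ioc_subset_Icc_self hx)) (abs_nonneg _)
  have hcont : Continuous fun x => |x - (a + b) / 2| * M := by fun_prop
  have h := norm_integral_le_of_norm_le hab hle (hcont.intervalIntegrable a b)
  rwa [intervalIntegral.integral_mul_const, integral_abs_sub_midpoint hab, Real.norm_eq_abs] at h

theorem stmt18 (I : Set ℝ) (hI : Set.OrdConnected I)
    (f f' : ℝ → ℝ) (a b : ℝ) (ha : a ∈ I) (hb : b ∈ I) (hab : a < b)
    (hderiv : ∀ x ∈ I, HasDerivAt f (f' x) x)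
    (hqc : QuasiConvexOn' (Set.Icc a b) (fun x => |f' x|)) :
    |(f a + f b)/2 - (1/(b-a)) * ∫ u in a..b, f u|
      ≤ (b-a)/4 * max |f' a| |f' b| := by
  have hba : 0 < b - a := sub_pos.2 hab
  have hIcc : uIcc a b = Icc a b := uIcc_of_le hab.le
  have hbound : ∀ x ∈ Icc a b, |f' x| ≤ max |f' a| |f' b| :=
    fun _ => hqc.le_max_of_mem_Icc hab.le
  have hf : ∀ x ∈ uIcc a b, HasDerivAt f (f' x) x :=
    fun x hx => hderiv x (hI.out ha hb (hIcc ▸ hx))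
  have hf' := intervalIntegrable_of_hasDerivAt_of_abs_le hf (hIcc ▸ hbound)
  have hkernel : (f a + f b) / 2 - (1 / (b - a)) * ∫ u in a..b, f u
      = (1 / (b - a)) * ∫ x in a..b, (x - (a + b) / 2) * f' x := by
    rw [integral_sub_midpoint_mul_deriv hf hf']
    field_simp
  rw [hkernel, abs_mul, abs_of_pos (one_div_pos.2 hba)]
  calc 1 / (b - a) * |∫ x in a..b, (x - (a + b) / 2) * f' x|
      ≤ 1 / (b - a) * ((b - a) ^ 2 / 4 * max |f' a| |f' b|) := by
        gcongr
        exact abs_integral_sub_midpoint_mul_le hab.le hbound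
    _ = (b - a) / 4 * max |f' a| |f' b| := by
        field_simp
end
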